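/- The conditional min-entropy of a convex combination is at least the minimum over the components: if ρ_{AB} = Σᵢ pᵢ ρⁱ_{AB} with {pᵢ} a probability distribution over finitely many states ρⁱ_{AB}, then for every ε ≥ 0, H_min^ε(A|B)_ρ ≥ minᵢ H_min^ε(A|B)_{ρⁱ}. -/

import Mathlib

open Matrix
open scoped ComplexOrder Classical

/-- The trace norm `‖X‖₁ = Tr √(XᴴX)` of a complex matrix. -/
noncomputable def traceNorm {n : Type*} [Fintype n] [DecidableEq n] (X : Matrix n n ℂ) : ℝ :=
  (((Matrix.posSemidef_conjTranspose_mul_self X).1.eigenvectorUnitary.1 *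
    diagonal (((↑) : ℝ → ℂ) ∘ Real.sqrt ∘ (Matrix.posSemidef_conjTranspose_mul_self X).1.eigenvalues) *
    (star (Matrix.posSemidef_conjTranspose_mul_self X).1.eigenvectorUnitary : Matrix n n ℂ)).trace).re

/-- The positive semidefinite square root, extended by `0` off the PSD cone. -/
noncomputable def msqrt {n : Type*} [Fintype n] [DecidableEq n] (X : Matrix n n ℂ) : Matrix n n ℂ :=
  if h : X.PosSemidef then h.1.eigenvectorUnitary.1 * diagonal (((↑) : ℝ → ℂ) ∘ Real.sqrt ∘ h.1.eigenvalues) *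
    (star h.1.eigenvectorUnitary : Matrix n n ℂ) else 0

/-- The fidelity `F(ρ,σ) = ‖√ρ √σ‖₁²`. -/
noncomputable def fidelity {n : Type*} [Fintype n] [DecidableEq n] (ρ σ : Matrix n n ℂ) : ℝ :=
  (traceNorm (msqrt ρ * msqrt σ)) ^ 2

open scoped Kronecker

/-- The generalized fidelity for sub-normalized states. -/
noncomputable def gFidelity {n : Type*} [Fintype n] [DecidableEq n] (ρ σ : Matrix n n ℂ) : ℝ :=
  (Real.sqrt (fidelity ρ σ) + Real.sqrt ((1 - ρ.trace.re) * (1 - σ.trace.re))) ^ 2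

/-- The purified distance `P(ρ,σ) = √(1 - F_*(ρ,σ))`. -/
noncomputable def purifiedDist {n : Type*} [Fintype n] [DecidableEq n] (ρ σ : Matrix n n ℂ) : ℝ :=
  Real.sqrt (1 - gFidelity ρ σ)

/-- The conditional min-entropy `H_min(A|B)_ρ = -log min {Tr σ_B : ρ_{AB} ≤ I_A ⊗ σ_B}`. -/
noncomputable def Hmin {A B : Type*} [Fintype A] [Fintype B] [DecidableEq A] [DecidableEq B]
    (ρ : Matrix (A × B) (A × B) ℂ) : ℝ :=
  - Real.logb 2 (sInf {t : ℝ | ∃ σ : Matrix B B ℂ, σ.PosSemidef ∧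
      ((1 : Matrix A A ℂ) ⊗ₖ σ - ρ).PosSemidef ∧ t = σ.trace.re})

/-- The `ε`-smooth conditional min-entropy: supremum of `H_min` over sub-normalized states
within purified distance `ε`. -/
noncomputable def HminSmooth {A B : Type*} [Fintype A] [Fintype B] [DecidableEq A] [DecidableEq B]
    (ε : ℝ) (ρ : Matrix (A × B) (A × B) ℂ) : ℝ :=
  sSup {x : ℝ | ∃ ρ' : Matrix (A × B) (A × B) ℂ, ρ'.PosSemidef ∧ ρ'.trace.re ≤ 1 ∧
      purifiedDist ρ' ρ ≤ ε ∧ x = Hmin ρ'}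

/-- The conditional max-entropy `H_max(A|B)_ρ = log max_{σ_B} F(ρ_{AB}, I_A ⊗ σ_B)`. -/
noncomputable def Hmax {A B : Type*} [Fintype A] [Fintype B] [DecidableEq A] [DecidableEq B]
    (ρ : Matrix (A × B) (A × B) ℂ) : ℝ :=
  Real.logb 2 (sSup {x : ℝ | ∃ σ : Matrix B B ℂ, σ.PosSemidef ∧ σ.trace = 1 ∧
      x = fidelity ρ ((1 : Matrix A A ℂ) ⊗ₖ σ)})

/-- The `ε`-smooth conditional max-entropy. -/
noncomputable def HmaxSmooth {A B : Type*} [Fintype A] [Fintype B] [DecidableEq A] [DecidableEq B]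
    (ε : ℝ) (ρ : Matrix (A × B) (A × B) ℂ) : ℝ :=
  sSup {x : ℝ | ∃ ρ' : Matrix (A × B) (A × B) ℂ, ρ'.PosSemidef ∧ ρ'.trace.re ≤ 1 ∧
      purifiedDist ρ' ρ ≤ ε ∧ x = Hmax ρ'}
/-!
Write `√F(ρ, σ) = Tr √(√σ ρ √σ)` for the root fidelity. Alberti's variational formula
`√F(ρ, σ) = inf_{T > 0} (Tr ρT⁻¹ + Tr σT) / 2` exhibits `√F` as an infimum of functions that are
linear in `(ρ, σ)`, so `√F` is jointly concave. For a normalized `ρ`, `P(ρ', ρ) ≤ ε` says exactly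
`√F(ρ', ρ) ≥ √(1 - ε²)`, so the `p`-mixture of smoothings `ρ'ᵢ ≈ ρᵢ` is a smoothing of `∑ pᵢ ρᵢ`.
Mixing operators `σᵢ` that witness `H_min(A|B)_{ρ'ᵢ} > y` with the same weights witnesses
`H_min(A|B) ≥ y` for `∑ pᵢ ρ'ᵢ`. For `ε ≥ 1` every subnormalized state lies in every smoothing
ball, and both sides coincide.
-/

open scoped MatrixOrder

lemma le_of_forall_pos_le_add_mul {x y d : ℝ} (h : ∀ η > 0, x ≤ y + η * d) : x ≤ y := by
  have hlim : Filter.Tendsto (fun η => y + η * d) (nhdsWithin 0 (Set.Ioi 0)) (nhds y) :=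
    ((by fun_prop : Continuous fun η : ℝ => y + η * d).tendsto' 0 y (by simp)).mono_left
      nhdsWithin_le_nhds
  exact ge_of_tendsto hlim (eventually_nhdsWithin_of_forall h)

namespace Matrix

lemma kronecker_sum_smul {R l m n p ι : Type*} [CommSemiring R] (M : Matrix l m R)
    (s : Finset ι) (c : ι → R) (N : ι → Matrix n p R) :
    M ⊗ₖ (∑ i ∈ s, c i • N i) = ∑ i ∈ s, c i • (M ⊗ₖ N i) := by
  have := map_sum (kroneckerBilinear (R := R) M : Matrix n p R →ₗ[R] Matrix (l × n) (m × p) R)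
    (fun i => c i • N i) s
  simp only [map_smul] at this
  exact this

lemma card_pos_left_of_re_trace_pos {A B : Type*} [Fintype A] [Fintype B]
    {ρ : Matrix (A × B) (A × B) ℂ} (h : 0 < ρ.trace.re) : 0 < (Fintype.card A : ℝ) := by
  obtain ⟨⟨a, -⟩⟩ : Nonempty (A × B) := by
    by_contra hAB
    simp [trace, not_nonempty_iff.mp hAB] at h
  exact_mod_cast Fintype.card_pos_iff.mpr ⟨a⟩

lemma posDef_add_smul_one {n : Type*} [DecidableEq n] {M : Matrix n n ℂ} (hM : 0 ≤ M) {γ : ℝ}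
    (hγ : 0 < γ) : (M + (γ : ℂ) • 1).PosDef :=
  PosDef.posSemidef_add hM.posSemidef (PosDef.one.smul (by exact_mod_cast hγ))

variable {n : Type*} [Fintype n]

lemma PosDef.mul_mul_of_isHermitian [DecidableEq n] {M C : Matrix n n ℂ} (hM : M.PosDef)
    (hC : C.IsHermitian) (hCu : IsUnit C) : (C * M * C).PosDef := by
  simpa [hC.eq] using hM.conjTranspose_mul_mul_same (mulVec_injective_iff_isUnit.mpr hCu)

lemma re_trace_mono {M N : Matrix n n ℂ} (h : M ≤ N) : M.trace.re ≤ N.trace.re := by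
  have := (Complex.le_def.mp (Matrix.le_iff.mp h).trace_nonneg).1
  simpa [trace_sub] using this

lemma re_trace_nonneg {M : Matrix n n ℂ} (hM : 0 ≤ M) : 0 ≤ M.trace.re := by
  simpa using re_trace_mono hM

lemma re_trace_sum_smul {ι : Type*} (s : Finset ι) (c : ι → ℝ) (M : ι → Matrix n n ℂ) :
    (∑ i ∈ s, (c i : ℂ) • M i).trace.re = ∑ i ∈ s, c i * (M i).trace.re := by
  simp [trace_sum, Complex.re_sum]

lemma sum_smul_nonneg {ι : Type*} (s : Finset ι) {c : ι → ℝ} (hc : ∀ i ∈ s, 0 ≤ c i)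
    {M : ι → Matrix n n ℂ} (hM : ∀ i ∈ s, 0 ≤ M i) : 0 ≤ ∑ i ∈ s, (c i : ℂ) • M i :=
  Finset.sum_nonneg fun i hi => smul_nonneg (by exact_mod_cast hc i hi) (hM i hi)

variable [DecidableEq n]

lemma re_trace_mul_nonneg {M N : Matrix n n ℂ} (hM : 0 ≤ M) (hN : 0 ≤ N) :
    0 ≤ (M * N).trace.re := by
  have : (CFC.sqrt M * N * CFC.sqrt M).trace = (M * N).trace := by
    rw [trace_mul_cycle, CFC.sqrt_mul_sqrt_self M]
  rw [← this]
  exact re_trace_nonneg (conjugate_nonneg_of_nonneg hN (CFC.sqrt_nonneg M))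

lemma le_re_trace_smul_one {M : Matrix n n ℂ} (hM : 0 ≤ M) :
    M ≤ (M.trace.re : ℂ) • (1 : Matrix n n ℂ) := by
  have hH := hM.posSemidef.1
  have : M ≤ algebraMap ℝ (Matrix n n ℂ) M.trace.re := by
    refine le_algebraMap_of_spectrum_le fun x hx => ?_
    obtain ⟨i, rfl⟩ := hH.spectrum_real_eq_range_eigenvalues ▸ hx
    rw [hH.trace_eq_sum_eigenvalues]
    simpa using Finset.single_le_sum (fun j _ => hM.posSemidef.eigenvalues_nonneg j)
      (Finset.mem_univ i)
  simpa [Algebra.algebraMap_eq_smul_one] using this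

lemma re_trace_sqrt_le {H T : Matrix n n ℂ} (hH : 0 ≤ H) (hT : T.PosDef) :
    (CFC.sqrt H).trace.re ≤ ((H * T⁻¹).trace.re + T.trace.re) / 2 := by
  set S := CFC.sqrt H
  have hsq : 0 ≤ (S - T) * T⁻¹ * (S - T) :=
    ((CFC.sqrt_nonneg H).isSelfAdjoint.sub hT.1).conjugate_nonneg hT.inv.posSemidef.nonneg
  have hexp : (S - T) * T⁻¹ * (S - T) = S * T⁻¹ * S - S - S + T := by
    simp only [sub_mul, mul_sub, mul_nonsing_inv _ hT.det_pos.ne'.isUnit, Matrix.one_mul,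
      nonsing_inv_mul_cancel_right _ _ hT.det_pos.ne'.isUnit]
    abel
  have htr : (S * T⁻¹ * S).trace = (H * T⁻¹).trace := by
    rw [trace_mul_cycle, CFC.sqrt_mul_sqrt_self H]
  have := re_trace_nonneg hsq
  rw [hexp, trace_add, trace_sub, trace_sub, htr] at this
  simp only [Complex.add_re, Complex.sub_re] at this
  linarith

lemma re_trace_mul_inv_sqrt_add_le {H : Matrix n n ℂ} (hH : 0 ≤ H) {γ : ℝ} (hγ : 0 < γ) :
    (H * (CFC.sqrt H + (γ : ℂ) • 1)⁻¹).trace.re ≤ (CFC.sqrt H).trace.re := by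
  set S := CFC.sqrt H
  set T := S + (γ : ℂ) • 1
  have hT : T.PosDef := posDef_add_smul_one (CFC.sqrt_nonneg H) hγ
  have hHT : H * T⁻¹ = S - (γ : ℂ) • (S * T⁻¹) := by
    have : H = S * T - (γ : ℂ) • S := by
      simp [T, mul_add, CFC.sqrt_mul_sqrt_self H, S]
    rw [this, sub_mul, mul_nonsing_inv_cancel_right _ _ hT.det_pos.ne'.isUnit, smul_mul]
  have := re_trace_mul_nonneg (CFC.sqrt_nonneg H) hT.inv.posSemidef.nonneg
  rw [hHT, trace_sub, trace_smul, Complex.sub_re, smul_eq_mul, Complex.re_ofReal_mul]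
  nlinarith

lemma trace_sqrt_conjTranspose_mul_self (X : Matrix n n ℂ) :
    (CFC.sqrt (Xᴴ * X)).trace = (CFC.sqrt (X * Xᴴ)).trace := by
  cases isEmpty_or_nonempty n
  · simp [trace]
  have h₁ := posSemidef_conjTranspose_mul_self X
  have h₂ := posSemidef_self_mul_conjTranspose X
  have heig : h₁.1.eigenvalues = h₂.1.eigenvalues :=
    (h₁.1.eigenvalues_eq_eigenvalues_iff h₂.1).mpr (charpoly_mul_comm _ _)
  rw [CFC.sqrt_eq_real_sqrt _ h₁.nonneg, CFC.sqrt_eq_real_sqrt _ h₂.nonneg, cfcₙ_eq_cfc,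
    cfcₙ_eq_cfc, trace_eq_neg_charpoly_coeff, trace_eq_neg_charpoly_coeff,
    h₁.1.charpoly_cfc_eq, h₂.1.charpoly_cfc_eq, heig]

end Matrix

section RootFidelity

variable {n : Type*} [Fintype n] [DecidableEq n]

noncomputable def rootFidelity (ρ σ : Matrix n n ℂ) : ℝ :=
  (CFC.sqrt (CFC.sqrt σ * ρ * CFC.sqrt σ)).trace.re

lemma msqrt_eq_sqrt {M : Matrix n n ℂ} (hM : 0 ≤ M) : msqrt M = CFC.sqrt M := by
  rw [CFC.sqrt_eq_real_sqrt M hM, cfcₙ_eq_cfc, hM.posSemidef.1.cfc_eq, IsHermitian.cfc,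
    Unitary.conjStarAlgAut_apply]
  exact dif_pos hM.posSemidef

lemma traceNorm_eq (X : Matrix n n ℂ) : traceNorm X = (CFC.sqrt (Xᴴ * X)).trace.re := by
  have h := posSemidef_conjTranspose_mul_self X
  rw [← msqrt_eq_sqrt h.nonneg, msqrt, dif_pos h, traceNorm]

lemma rootFidelity_nonneg (ρ σ : Matrix n n ℂ) : 0 ≤ rootFidelity ρ σ :=
  re_trace_nonneg (CFC.sqrt_nonneg _)

lemma conjTranspose_mul_self_sqrt_mul_sqrt {ρ : Matrix n n ℂ} (hρ : 0 ≤ ρ) (σ : Matrix n n ℂ) :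
    (CFC.sqrt ρ * CFC.sqrt σ)ᴴ * (CFC.sqrt ρ * CFC.sqrt σ) = CFC.sqrt σ * ρ * CFC.sqrt σ := by
  rw [conjTranspose_mul, (CFC.sqrt_nonneg ρ).posSemidef.1.eq, (CFC.sqrt_nonneg σ).posSemidef.1.eq,
    Matrix.mul_assoc, ← Matrix.mul_assoc (CFC.sqrt ρ), CFC.sqrt_mul_sqrt_self ρ hρ,
    ← Matrix.mul_assoc]

lemma sqrt_mul_sqrt_mul_conjTranspose_self (ρ : Matrix n n ℂ) {σ : Matrix n n ℂ} (hσ : 0 ≤ σ) :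
    (CFC.sqrt ρ * CFC.sqrt σ) * (CFC.sqrt ρ * CFC.sqrt σ)ᴴ = CFC.sqrt ρ * σ * CFC.sqrt ρ := by
  rw [conjTranspose_mul, (CFC.sqrt_nonneg ρ).posSemidef.1.eq, (CFC.sqrt_nonneg σ).posSemidef.1.eq,
    Matrix.mul_assoc, ← Matrix.mul_assoc (CFC.sqrt σ), CFC.sqrt_mul_sqrt_self σ hσ,
    ← Matrix.mul_assoc]

lemma sqrt_fidelity {ρ σ : Matrix n n ℂ} (hρ : 0 ≤ ρ) (hσ : 0 ≤ σ) :
    √(fidelity ρ σ) = rootFidelity ρ σ := by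
  rw [fidelity, msqrt_eq_sqrt hρ, msqrt_eq_sqrt hσ, traceNorm_eq,
    conjTranspose_mul_self_sqrt_mul_sqrt hρ]
  exact Real.sqrt_sq (rootFidelity_nonneg ρ σ)

lemma rootFidelity_comm {ρ σ : Matrix n n ℂ} (hρ : 0 ≤ ρ) (hσ : 0 ≤ σ) :
    rootFidelity ρ σ = rootFidelity σ ρ := by
  have h := trace_sqrt_conjTranspose_mul_self (CFC.sqrt ρ * CFC.sqrt σ)
  rw [conjTranspose_mul_self_sqrt_mul_sqrt hρ, sqrt_mul_sqrt_mul_conjTranspose_self ρ hσ] at h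
  rw [rootFidelity, rootFidelity, h]

open scoped Matrix.Norms.L2Operator in
lemma rootFidelity_mono_right {ρ σ σ' : Matrix n n ℂ} (hρ : 0 ≤ ρ) (hσ : 0 ≤ σ) (h : σ ≤ σ') :
    rootFidelity ρ σ ≤ rootFidelity ρ σ' := by
  rw [rootFidelity_comm hρ hσ, rootFidelity_comm hρ (hσ.trans h)]
  refine re_trace_mono (CFC.sqrt_le_sqrt _ _ ?_)
  simpa [(CFC.sqrt_nonneg ρ).isSelfAdjoint.star_eq] using
    star_left_conjugate_le_conjugate h (CFC.sqrt ρ)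

lemma rootFidelity_le_of_posDef {ρ σ T : Matrix n n ℂ} (hρ : 0 ≤ ρ) (hσ : σ.PosDef)
    (hT : T.PosDef) : rootFidelity ρ σ ≤ ((ρ * T⁻¹).trace.re + (σ * T).trace.re) / 2 := by
  set W := CFC.sqrt σ
  have hW : W.PosDef := (hσ.isStrictlyPositive.sqrt).posDef
  have hWu := hW.det_pos.ne'.isUnit
  have hWTW : (W * T * W).PosDef := hT.mul_mul_of_isHermitian hW.1 hW.isUnit
  have h₁ : (W * ρ * W * (W * T * W)⁻¹).trace = (ρ * T⁻¹).trace := by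
    simp only [Matrix.mul_inv_rev, Matrix.mul_assoc, mul_nonsing_inv_cancel_left _ _ hWu]
    rw [trace_mul_comm]
    simp only [Matrix.mul_assoc, nonsing_inv_mul _ hWu, Matrix.mul_one]
  have h₂ : (W * T * W).trace = (σ * T).trace := by
    rw [trace_mul_cycle, CFC.sqrt_mul_sqrt_self σ hσ.posSemidef.nonneg]
  have := re_trace_sqrt_le (IsSelfAdjoint.conjugate_nonneg hρ hW.1) hWTW
  rwa [h₁, h₂] at this

lemma rootFidelity_le {ρ σ T : Matrix n n ℂ} (hρ : 0 ≤ ρ) (hσ : 0 ≤ σ) (hT : T.PosDef) :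
    rootFidelity ρ σ ≤ ((ρ * T⁻¹).trace.re + (σ * T).trace.re) / 2 := by
  refine le_of_forall_pos_le_add_mul (d := T.trace.re / 2) fun η hη => ?_
  calc rootFidelity ρ σ ≤ rootFidelity ρ (σ + (η : ℂ) • 1) :=
        rootFidelity_mono_right hρ hσ
          (le_add_of_nonneg_right (smul_nonneg (by exact_mod_cast hη.le) zero_le_one))
    _ ≤ ((ρ * T⁻¹).trace.re + ((σ + (η : ℂ) • 1) * T).trace.re) / 2 :=
        rootFidelity_le_of_posDef hρ (posDef_add_smul_one hσ hη) hT
    _ = ((ρ * T⁻¹).trace.re + (σ * T).trace.re) / 2 + η * (T.trace.re / 2) := by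
        simp only [add_mul, smul_mul, Matrix.one_mul, trace_add, trace_smul, Complex.add_re,
          smul_eq_mul, Complex.re_ofReal_mul]
        ring

open scoped Matrix.Norms.L2Operator in
lemma rootFidelity_add_smul_one_le {ρ σ : Matrix n n ℂ} (hρ : 0 ≤ ρ) (hσ : 0 ≤ σ) {γ : ℝ}
    (hγ : 0 ≤ γ) :
    rootFidelity ρ (σ + (γ : ℂ) • 1) ≤
      rootFidelity ρ σ + Fintype.card n * √(γ * ρ.trace.re) := by
  have hγ1 : (0 : Matrix n n ℂ) ≤ (γ : ℂ) • 1 := smul_nonneg (by exact_mod_cast hγ) zero_le_one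
  rw [rootFidelity_comm hρ (add_nonneg hσ hγ1), rootFidelity_comm hρ hσ, rootFidelity,
    rootFidelity]
  set K := CFC.sqrt ρ * σ * CFC.sqrt ρ
  set a := √(γ * ρ.trace.re)
  have ha : (0 : ℂ) ≤ a := by exact_mod_cast Real.sqrt_nonneg _
  have hsum : CFC.sqrt ρ * (σ + (γ : ℂ) • 1) * CFC.sqrt ρ = K + (γ : ℂ) • ρ := by
    simp [K, mul_add, add_mul, CFC.sqrt_mul_sqrt_self ρ hρ]
  have hsq : (CFC.sqrt K + (a : ℂ) • 1) ^ 2 = K + (2 * a : ℂ) • CFC.sqrt K + (a : ℂ) ^ 2 • 1 := by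
    rw [(Commute.smul_right (Commute.one_right _) _).add_sq, CFC.sq_sqrt K, mul_smul_comm,
      mul_one, smul_pow, one_pow, two_mul]
    module
  have hle : K + (γ : ℂ) • ρ ≤ (CFC.sqrt K + (a : ℂ) • 1) ^ 2 := by
    rw [hsq, add_assoc]
    gcongr
    calc (γ : ℂ) • ρ ≤ (γ : ℂ) • ((ρ.trace.re : ℂ) • 1) :=
          smul_le_smul_of_nonneg_left (le_re_trace_smul_one hρ) (by exact_mod_cast hγ)
      _ = (a : ℂ) ^ 2 • 1 := by
          rw [smul_smul, ← Complex.ofReal_pow, Real.sq_sqrt (mul_nonneg hγ (re_trace_nonneg hρ)),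
            Complex.ofReal_mul]
      _ ≤ (2 * a : ℂ) • CFC.sqrt K + (a : ℂ) ^ 2 • 1 :=
          le_add_of_nonneg_left (smul_nonneg (by positivity) (CFC.sqrt_nonneg K))
  have hsqrt := CFC.sqrt_le_sqrt _ _ hle
  rw [CFC.sqrt_sq _ (add_nonneg (CFC.sqrt_nonneg K) (smul_nonneg ha zero_le_one))] at hsqrt
  rw [hsum]
  refine (re_trace_mono hsqrt).trans_eq ?_
  simp [trace_add, trace_smul, mul_comm]

-- The equality case `T = √H + γ` of `re_trace_sqrt_le` for `H = √σ ρ √σ`, conjugated back by `√σ`.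
lemma exists_le_rootFidelity_add_of_posDef {ρ σ : Matrix n n ℂ} (hρ : 0 ≤ ρ) (hσ : σ.PosDef)
    {γ : ℝ} (hγ : 0 < γ) : ∃ T : Matrix n n ℂ, T.PosDef ∧
      ((ρ * T⁻¹).trace.re + (σ * T).trace.re) / 2 ≤ rootFidelity ρ σ + Fintype.card n * γ / 2 := by
  set W := CFC.sqrt σ
  have hW : W.PosDef := (hσ.isStrictlyPositive.sqrt).posDef
  have hWu := hW.det_pos.ne'.isUnit
  set H := W * ρ * W
  have hH : 0 ≤ H := IsSelfAdjoint.conjugate_nonneg hρ hW.1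
  set S := CFC.sqrt H + (γ : ℂ) • 1
  have hS : S.PosDef := posDef_add_smul_one (CFC.sqrt_nonneg H) hγ
  refine ⟨W⁻¹ * S * W⁻¹, hS.mul_mul_of_isHermitian hW.inv.1 hW.inv.isUnit, ?_⟩
  have h₁ : (ρ * (W⁻¹ * S * W⁻¹)⁻¹).trace = (H * S⁻¹).trace := by
    rw [Matrix.mul_inv_rev, Matrix.mul_inv_rev, nonsing_inv_nonsing_inv _ hWu]
    rw [show ρ * (W * (S⁻¹ * W)) = ρ * W * S⁻¹ * W by simp only [Matrix.mul_assoc],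
      trace_mul_comm]
    simp only [H, Matrix.mul_assoc]
  have h₂ : (σ * (W⁻¹ * S * W⁻¹)).trace = S.trace := by
    have hσW : σ = W * W := (CFC.sqrt_mul_sqrt_self σ hσ.posSemidef.nonneg).symm
    rw [hσW]
    simp only [Matrix.mul_assoc, mul_nonsing_inv_cancel_left _ _ hWu]
    rw [trace_mul_comm, Matrix.mul_assoc, nonsing_inv_mul _ hWu, Matrix.mul_one]
  have h₃ := re_trace_mul_inv_sqrt_add_le hH hγ
  rw [h₁, h₂]
  simp only [S, trace_add, trace_smul, trace_one, Complex.add_re, smul_eq_mul,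
    Complex.re_ofReal_mul, Complex.natCast_re] at h₃ ⊢
  change _ ≤ (CFC.sqrt H).trace.re + _
  linarith

lemma exists_le_rootFidelity_add {ρ σ : Matrix n n ℂ} (hρ : 0 ≤ ρ) (hσ : 0 ≤ σ) {δ : ℝ}
    (hδ : 0 < δ) : ∃ T : Matrix n n ℂ, T.PosDef ∧
      ((ρ * T⁻¹).trace.re + (σ * T).trace.re) / 2 ≤ rootFidelity ρ σ + δ := by
  set c : ℝ := (Fintype.card n : ℝ)
  have hsmall : ∀ᶠ γ in nhdsWithin (0 : ℝ) (Set.Ioi 0), c * √(γ * ρ.trace.re) + c * γ / 2 < δ :=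
    (((by fun_prop : Continuous fun γ : ℝ => c * √(γ * ρ.trace.re) + c * γ / 2).tendsto' 0 0
      (by simp)).mono_left nhdsWithin_le_nhds).eventually (gt_mem_nhds hδ)
  obtain ⟨γ, hγδ, hγ⟩ := (hsmall.and self_mem_nhdsWithin).exists
  obtain ⟨T, hT, hTle⟩ := exists_le_rootFidelity_add_of_posDef hρ (posDef_add_smul_one hσ hγ) hγ
  have hshift : (σ * T).trace.re ≤ ((σ + (γ : ℂ) • 1) * T).trace.re := by
    have := re_trace_nonneg hT.posSemidef.nonneg
    simp only [add_mul, smul_mul, Matrix.one_mul, trace_add, trace_smul, Complex.add_re,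
      smul_eq_mul, Complex.re_ofReal_mul]
    nlinarith
  have hperturb := rootFidelity_add_smul_one_le hρ hσ hγ.le
  exact ⟨T, hT, by linarith⟩

lemma sum_mul_rootFidelity_le {ι : Type*} (s : Finset ι) {p : ι → ℝ} (hp : ∀ i ∈ s, 0 ≤ p i)
    {ρ σ : ι → Matrix n n ℂ} (hρ : ∀ i ∈ s, 0 ≤ ρ i) (hσ : ∀ i ∈ s, 0 ≤ σ i) :
    ∑ i ∈ s, p i * rootFidelity (ρ i) (σ i) ≤
      rootFidelity (∑ i ∈ s, (p i : ℂ) • ρ i) (∑ i ∈ s, (p i : ℂ) • σ i) := by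
  refine le_of_forall_pos_le_add fun δ hδ => ?_
  obtain ⟨T, hT, hTle⟩ :=
    exists_le_rootFidelity_add (sum_smul_nonneg s hp hρ) (sum_smul_nonneg s hp hσ) hδ
  refine le_trans ?_ hTle
  calc ∑ i ∈ s, p i * rootFidelity (ρ i) (σ i)
      ≤ ∑ i ∈ s, p i * (((ρ i * T⁻¹).trace.re + (σ i * T).trace.re) / 2) :=
        Finset.sum_le_sum fun i hi =>
          mul_le_mul_of_nonneg_left (rootFidelity_le (hρ i hi) (hσ i hi) hT) (hp i hi)
    _ = _ := by
        simp only [Finset.sum_mul, trace_sum, Complex.re_sum, smul_mul, trace_smul, smul_eq_mul,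
          Complex.re_ofReal_mul, ← Finset.sum_add_distrib, Finset.sum_div]
        exact Finset.sum_congr rfl fun i _ => by ring

lemma rootFidelity_self {ρ : Matrix n n ℂ} (hρ : 0 ≤ ρ) : rootFidelity ρ ρ = ρ.trace.re := by
  have h : CFC.sqrt ρ * ρ * CFC.sqrt ρ = ρ * ρ := by
    calc CFC.sqrt ρ * ρ * CFC.sqrt ρ = CFC.sqrt ρ * (CFC.sqrt ρ * CFC.sqrt ρ) * CFC.sqrt ρ := by
          rw [CFC.sqrt_mul_sqrt_self ρ hρ]
      _ = (CFC.sqrt ρ * CFC.sqrt ρ) * (CFC.sqrt ρ * CFC.sqrt ρ) := by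
          simp only [Matrix.mul_assoc]
      _ = ρ * ρ := by rw [CFC.sqrt_mul_sqrt_self ρ hρ]
  rw [rootFidelity, h, CFC.sqrt_mul_self ρ hρ]

lemma rootFidelity_le_sqrt_re_trace {ρ σ : Matrix n n ℂ} (hρ : 0 ≤ ρ) (hσ : 0 ≤ σ)
    (hσ1 : σ.trace.re = 1) : rootFidelity ρ σ ≤ √ρ.trace.re := by
  have hbound : ∀ t > 0, rootFidelity ρ σ ≤ (ρ.trace.re / t + t) / 2 := by
    intro t ht
    have hT : ((t : ℂ) • (1 : Matrix n n ℂ)).PosDef := PosDef.one.smul (by exact_mod_cast ht)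
    have hTinv : ((t : ℂ) • (1 : Matrix n n ℂ))⁻¹ = (t : ℂ)⁻¹ • 1 :=
      inv_eq_right_inv (by rw [smul_mul_smul_comm, mul_inv_cancel₀ (by exact_mod_cast ht.ne'),
        Matrix.mul_one, one_smul])
    have := rootFidelity_le hρ hσ hT
    rw [hTinv] at this
    simpa [trace_smul, hσ1, div_eq_inv_mul, ht.ne'] using this
  rcases (re_trace_nonneg hρ).eq_or_lt with h0 | hpos
  · rw [← h0, Real.sqrt_zero]
    refine le_of_forall_pos_le_add_mul (d := 1 / 2) fun t ht => ?_
    have := hbound t ht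
    rw [← h0, zero_div] at this
    linarith
  · simpa [Real.div_sqrt] using hbound _ (Real.sqrt_pos.mpr hpos)

lemma fidelity_nonneg (ρ σ : Matrix n n ℂ) : 0 ≤ fidelity ρ σ := sq_nonneg _

lemma gFidelity_of_re_trace_eq_one (ρ : Matrix n n ℂ) {σ : Matrix n n ℂ} (hσ1 : σ.trace.re = 1) :
    gFidelity ρ σ = fidelity ρ σ := by
  rw [gFidelity, hσ1, sub_self, mul_zero, Real.sqrt_zero, add_zero,
    Real.sq_sqrt (fidelity_nonneg ρ σ)]

lemma purifiedDist_le_one (ρ σ : Matrix n n ℂ) : purifiedDist ρ σ ≤ 1 := by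
  have : 0 ≤ gFidelity ρ σ := sq_nonneg _
  rw [purifiedDist, Real.sqrt_le_left zero_le_one]
  linarith

lemma purifiedDist_le_iff {ρ σ : Matrix n n ℂ} (hρ : 0 ≤ ρ) (hσ : 0 ≤ σ)
    (hσ1 : σ.trace.re = 1) {ε : ℝ} (hε : 0 ≤ ε) :
    purifiedDist ρ σ ≤ ε ↔ √(1 - ε ^ 2) ≤ rootFidelity ρ σ := by
  rw [purifiedDist, gFidelity_of_re_trace_eq_one ρ hσ1, Real.sqrt_le_left hε,
    ← sqrt_fidelity hρ hσ, Real.sqrt_le_sqrt_iff (fidelity_nonneg ρ σ)]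
  constructor <;> intro h <;> linarith

end RootFidelity

section MinEntropy

variable {A B : Type*} [Fintype B] [DecidableEq A]

def feasibleTraces (ρ : Matrix (A × B) (A × B) ℂ) : Set ℝ :=
  {t : ℝ | ∃ σ : Matrix B B ℂ, σ.PosSemidef ∧
    ((1 : Matrix A A ℂ) ⊗ₖ σ - ρ).PosSemidef ∧ t = σ.trace.re}

lemma feasibleTraces_bddBelow (ρ : Matrix (A × B) (A × B) ℂ) : BddBelow (feasibleTraces ρ) :=
  ⟨0, by rintro _ ⟨σ, hσ, -, rfl⟩; exact re_trace_nonneg hσ.nonneg⟩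

variable [Fintype A]

lemma re_trace_le_card_mul {ρ : Matrix (A × B) (A × B) ℂ} {σ : Matrix B B ℂ}
    (h : ((1 : Matrix A A ℂ) ⊗ₖ σ - ρ).PosSemidef) :
    ρ.trace.re ≤ Fintype.card A * σ.trace.re := by
  have := re_trace_nonneg h.nonneg
  rw [trace_sub, trace_kronecker, trace_one, Complex.sub_re, Complex.mul_re, Complex.natCast_re,
    Complex.natCast_im, zero_mul, sub_zero] at this
  linarith

variable [DecidableEq B] {ρ : Matrix (A × B) (A × B) ℂ}

lemma Hmin_eq (ρ : Matrix (A × B) (A × B) ℂ) :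
    Hmin ρ = -Real.logb 2 (sInf (feasibleTraces ρ)) :=
  rfl

lemma feasibleTraces_nonempty (hρ : 0 ≤ ρ) : (feasibleTraces ρ).Nonempty := by
  refine ⟨_, (ρ.trace.re : ℂ) • 1,
    (smul_nonneg (by exact_mod_cast re_trace_nonneg hρ) zero_le_one).posSemidef, ?_, rfl⟩
  rw [kronecker_smul, one_kronecker_one]
  exact le_re_trace_smul_one hρ

lemma re_trace_div_card_le_sInf (hρ : 0 ≤ ρ) :
    ρ.trace.re / Fintype.card A ≤ sInf (feasibleTraces ρ) := by
  refine le_csInf (feasibleTraces_nonempty hρ) ?_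
  rintro _ ⟨σ, hσ, hfeas, rfl⟩
  exact div_le_of_le_mul₀ (Nat.cast_nonneg _) (re_trace_nonneg hσ.nonneg)
    ((re_trace_le_card_mul hfeas).trans_eq (mul_comm _ _))

lemma sInf_feasibleTraces_pos (hρ : 0 ≤ ρ) (hpos : 0 < ρ.trace.re) :
    0 < sInf (feasibleTraces ρ) :=
  (div_pos hpos (card_pos_left_of_re_trace_pos hpos)).trans_le (re_trace_div_card_le_sInf hρ)

lemma le_Hmin (hρ : 0 ≤ ρ) (hpos : 0 < ρ.trace.re) {σ : Matrix B B ℂ} (hσ : σ.PosSemidef)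
    (hfeas : ((1 : Matrix A A ℂ) ⊗ₖ σ - ρ).PosSemidef) {y : ℝ} (hy : σ.trace.re ≤ 2 ^ (-y)) :
    y ≤ Hmin ρ := by
  have hle : sInf (feasibleTraces ρ) ≤ 2 ^ (-y) :=
    (csInf_le (feasibleTraces_bddBelow ρ) ⟨σ, hσ, hfeas, rfl⟩).trans hy
  rw [Hmin_eq, le_neg, ← Real.logb_rpow (b := 2) (by norm_num) (by norm_num) (x := -y)]
  exact Real.logb_le_logb_of_le (by norm_num) (sInf_feasibleTraces_pos hρ hpos) hle

lemma Hmin_le (hρ : 0 ≤ ρ) {c : ℝ} (hc : 0 < c) (hcρ : c ≤ ρ.trace.re) :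
    Hmin ρ ≤ -Real.logb 2 (c / Fintype.card A) := by
  have hA := card_pos_left_of_re_trace_pos (hc.trans_le hcρ)
  rw [Hmin_eq, neg_le_neg_iff]
  exact Real.logb_le_logb_of_le (by norm_num) (div_pos hc hA)
    ((div_le_div_of_nonneg_right hcρ hA.le).trans (re_trace_div_card_le_sInf hρ))

lemma exists_feasible_of_lt_Hmin (hρ : 0 ≤ ρ) (hpos : 0 < ρ.trace.re) {y : ℝ}
    (hy : y < Hmin ρ) : ∃ σ : Matrix B B ℂ, σ.PosSemidef ∧
      ((1 : Matrix A A ℂ) ⊗ₖ σ - ρ).PosSemidef ∧ σ.trace.re < 2 ^ (-y) := by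
  have hlt : sInf (feasibleTraces ρ) < 2 ^ (-y) := by
    rw [Hmin_eq, lt_neg] at hy
    exact (Real.logb_lt_iff_lt_rpow (by norm_num) (sInf_feasibleTraces_pos hρ hpos)).mp hy
  obtain ⟨_, ⟨σ, hσ, hfeas, rfl⟩, hσy⟩ := exists_lt_of_csInf_lt (feasibleTraces_nonempty hρ) hlt
  exact ⟨σ, hσ, hfeas, hσy⟩

lemma inf'_Hmin_le_Hmin_sum_smul {ι : Type*} [Fintype ι] [Nonempty ι] {p : ι → ℝ}
    (hp : ∀ i, 0 ≤ p i) (hp1 : ∑ i, p i = 1) {ρ : ι → Matrix (A × B) (A × B) ℂ}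
    (hρ : ∀ i, 0 ≤ ρ i) (hpos : ∀ i, 0 < (ρ i).trace.re) :
    Finset.univ.inf' Finset.univ_nonempty (fun i => Hmin (ρ i)) ≤
      Hmin (∑ i, (p i : ℂ) • ρ i) := by
  refine le_of_forall_lt_imp_le_of_dense fun y hy => ?_
  have hyi i : y < Hmin (ρ i) := (Finset.lt_inf'_iff _).mp hy i (Finset.mem_univ i)
  choose σ hσ hfeas hσy using fun i => exists_feasible_of_lt_Hmin (hρ i) (hpos i) (hyi i)
  have hmixpos : 0 < (∑ i, (p i : ℂ) • ρ i).trace.re := by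
    obtain ⟨j, -, hj⟩ := Finset.exists_lt_of_sum_lt (s := Finset.univ) (f := fun _ => (0 : ℝ))
      (g := p) (by simp [hp1])
    rw [re_trace_sum_smul]
    exact Finset.sum_pos' (fun i _ => mul_nonneg (hp i) (hpos i).le)
      ⟨j, Finset.mem_univ j, mul_pos hj (hpos j)⟩
  refine le_Hmin (sum_smul_nonneg _ (fun i _ => hp i) fun i _ => hρ i) hmixpos
    (σ := ∑ i, (p i : ℂ) • σ i)
    (posSemidef_sum _ fun i _ => (hσ i).smul (by exact_mod_cast hp i)) ?_ ?_
  · rw [kronecker_sum_smul, ← Finset.sum_sub_distrib]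
    exact posSemidef_sum _ fun i _ => by
      rw [← smul_sub]
      exact (hfeas i).smul (by exact_mod_cast hp i)
  · rw [re_trace_sum_smul]
    calc ∑ i, p i * (σ i).trace.re ≤ ∑ i, p i * 2 ^ (-y) :=
          Finset.sum_le_sum fun i _ => mul_le_mul_of_nonneg_left (hσy i).le (hp i)
      _ = 2 ^ (-y) := by rw [← Finset.sum_mul, hp1, one_mul]

end MinEntropy

section SmoothMinEntropy

variable {n : Type*} [Fintype n] [DecidableEq n]

def smoothingBall (ε : ℝ) (ρ : Matrix n n ℂ) : Set (Matrix n n ℂ) :=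
  {ρ' | ρ'.PosSemidef ∧ ρ'.trace.re ≤ 1 ∧ purifiedDist ρ' ρ ≤ ε}

lemma smoothingBall_eq_of_one_le {ε : ℝ} (hε : 1 ≤ ε) (ρ σ : Matrix n n ℂ) :
    smoothingBall ε ρ = smoothingBall ε σ := by
  ext
  simp [smoothingBall, (purifiedDist_le_one _ _).trans hε]

variable {ε : ℝ} {ρ : Matrix n n ℂ}

lemma self_mem_smoothingBall (hρ : 0 ≤ ρ) (hρ1 : ρ.trace.re = 1) (hε : 0 ≤ ε) :
    ρ ∈ smoothingBall ε ρ := by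
  refine ⟨hρ.posSemidef, hρ1.le, (purifiedDist_le_iff hρ hρ hρ1 hε).mpr ?_⟩
  rw [rootFidelity_self hρ, hρ1, Real.sqrt_le_left zero_le_one]
  nlinarith

lemma one_sub_sq_le_re_trace_of_mem_smoothingBall (hρ : 0 ≤ ρ) (hρ1 : ρ.trace.re = 1)
    (hε : 0 ≤ ε) {ρ' : Matrix n n ℂ} (h : ρ' ∈ smoothingBall ε ρ) : 1 - ε ^ 2 ≤ ρ'.trace.re :=
  (Real.sqrt_le_sqrt_iff (re_trace_nonneg h.1.nonneg)).mp
    (((purifiedDist_le_iff h.1.nonneg hρ hρ1 hε).mp h.2.2).trans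
      (rootFidelity_le_sqrt_re_trace h.1.nonneg hρ hρ1))

lemma re_trace_pos_of_mem_smoothingBall (hρ : 0 ≤ ρ) (hρ1 : ρ.trace.re = 1) (hε : 0 ≤ ε)
    (hε1 : ε < 1) {ρ' : Matrix n n ℂ} (h : ρ' ∈ smoothingBall ε ρ) : 0 < ρ'.trace.re :=
  (by nlinarith : (0 : ℝ) < 1 - ε ^ 2).trans_le
    (one_sub_sq_le_re_trace_of_mem_smoothingBall hρ hρ1 hε h)

lemma sum_smul_mem_smoothingBall {ι : Type*} [Fintype ι] {p : ι → ℝ} (hp : ∀ i, 0 ≤ p i)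
    (hp1 : ∑ i, p i = 1) {ρ ρ' : ι → Matrix n n ℂ} (hρ : ∀ i, 0 ≤ ρ i)
    (hρ1 : ∀ i, (ρ i).trace.re = 1) (hε : 0 ≤ ε) (hρ' : ∀ i, ρ' i ∈ smoothingBall ε (ρ i)) :
    ∑ i, (p i : ℂ) • ρ' i ∈ smoothingBall ε (∑ i, (p i : ℂ) • ρ i) := by
  have hρ'0 i : 0 ≤ ρ' i := (hρ' i).1.nonneg
  have hmix' := sum_smul_nonneg Finset.univ (fun i _ => hp i) fun i _ => hρ'0 i
  have hmix := sum_smul_nonneg Finset.univ (fun i _ => hp i) fun i _ => hρ i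
  refine ⟨hmix'.posSemidef, ?_, (purifiedDist_le_iff hmix' hmix (by simp [hρ1, hp1]) hε).mpr ?_⟩
  · rw [re_trace_sum_smul, ← hp1]
    exact Finset.sum_le_sum fun i _ => mul_le_of_le_one_right (hp i) (hρ' i).2.1
  calc √(1 - ε ^ 2) = ∑ i, p i * √(1 - ε ^ 2) := by rw [← Finset.sum_mul, hp1, one_mul]
    _ ≤ ∑ i, p i * rootFidelity (ρ' i) (ρ i) :=
        Finset.sum_le_sum fun i _ => mul_le_mul_of_nonneg_left
          ((purifiedDist_le_iff (hρ'0 i) (hρ i) (hρ1 i) hε).mp (hρ' i).2.2) (hp i)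
    _ ≤ _ := sum_mul_rootFidelity_le _ (fun i _ => hp i) (fun i _ => hρ'0 i) fun i _ => hρ i

end SmoothMinEntropy

section HminSmooth

variable {A B : Type*} [Fintype A] [Fintype B] [DecidableEq A] [DecidableEq B] {ε : ℝ}

lemma HminSmooth_eq (ε : ℝ) (ρ : Matrix (A × B) (A × B) ℂ) :
    HminSmooth ε ρ = sSup (Hmin '' smoothingBall ε ρ) := by
  rw [HminSmooth]
  congr 1
  ext x
  simp [smoothingBall, eq_comm, and_assoc]

lemma HminSmooth_eq_of_one_le (hε : 1 ≤ ε) (ρ σ : Matrix (A × B) (A × B) ℂ) :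
    HminSmooth ε ρ = HminSmooth ε σ := by
  rw [HminSmooth_eq, HminSmooth_eq, smoothingBall_eq_of_one_le hε ρ σ]

variable {ρ : Matrix (A × B) (A × B) ℂ}

lemma exists_mem_smoothingBall_lt_Hmin (hρ : 0 ≤ ρ) (hρ1 : ρ.trace.re = 1) (hε : 0 ≤ ε) {y : ℝ}
    (hy : y < HminSmooth ε ρ) :
    ∃ ρ' ∈ smoothingBall ε ρ, y < Hmin ρ' := by
  rw [HminSmooth_eq] at hy
  obtain ⟨_, ⟨ρ', hρ', rfl⟩, hlt⟩ :=
    exists_lt_of_lt_csSup ⟨_, Set.mem_image_of_mem Hmin (self_mem_smoothingBall hρ hρ1 hε)⟩ hy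
  exact ⟨ρ', hρ', hlt⟩

lemma Hmin_le_HminSmooth (hρ : 0 ≤ ρ) (hρ1 : ρ.trace.re = 1) (hε : 0 ≤ ε) (hε1 : ε < 1)
    {ρ' : Matrix (A × B) (A × B) ℂ} (h : ρ' ∈ smoothingBall ε ρ) : Hmin ρ' ≤ HminSmooth ε ρ := by
  have hbdd : BddAbove (Hmin '' smoothingBall ε ρ) := by
    refine ⟨-Real.logb 2 ((1 - ε ^ 2) / Fintype.card A), ?_⟩
    rintro _ ⟨ρ'', h'', rfl⟩
    exact Hmin_le h''.1.nonneg (by nlinarith)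
      (one_sub_sq_le_re_trace_of_mem_smoothingBall hρ hρ1 hε h'')
  rw [HminSmooth_eq]
  exact le_csSup hbdd (Set.mem_image_of_mem _ h)

end HminSmooth

/-- The smooth conditional min-entropy of a convex combination is at least the minimum over
the components. -/
theorem HminSmooth_mixture {A B ι : Type*} [Fintype A] [Fintype B] [Fintype ι]
    [DecidableEq A] [DecidableEq B] [Nonempty ι]
    (ρ : ι → Matrix (A × B) (A × B) ℂ) (p : ι → ℝ)
    (hp : ∀ i, 0 ≤ p i) (hp1 : ∑ i, p i = 1)
    (hρ : ∀ i, (ρ i).PosSemidef) (hρ1 : ∀ i, (ρ i).trace = 1)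
    (ε : ℝ) (hε : 0 ≤ ε) :
    (Finset.univ.inf' Finset.univ_nonempty fun i => HminSmooth ε (ρ i)) ≤
      HminSmooth ε (∑ i, (p i : ℂ) • ρ i) := by
  have hρ0 i : 0 ≤ ρ i := (hρ i).nonneg
  have hρ1' i : (ρ i).trace.re = 1 := by rw [hρ1 i, Complex.one_re]
  rcases le_or_gt 1 ε with hε1 | hε1
  · simp_rw [HminSmooth_eq_of_one_le hε1 _ (∑ i, (p i : ℂ) • ρ i), Finset.inf'_const, le_refl]
  refine le_of_forall_lt_imp_le_of_dense fun y hy => ?_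
  choose ρ' hρ' hlt using fun i => exists_mem_smoothingBall_lt_Hmin (hρ0 i) (hρ1' i) hε
    ((Finset.lt_inf'_iff _).mp hy i (Finset.mem_univ i))
  calc y ≤ Finset.univ.inf' Finset.univ_nonempty fun i => Hmin (ρ' i) :=
        Finset.le_inf' _ _ fun i _ => (hlt i).le
    _ ≤ Hmin (∑ i, (p i : ℂ) • ρ' i) := inf'_Hmin_le_Hmin_sum_smul hp hp1
        (fun i => (hρ' i).1.nonneg)
        fun i => re_trace_pos_of_mem_smoothingBall (hρ0 i) (hρ1' i) hε hε1 (hρ' i)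
    _ ≤ _ := Hmin_le_HminSmooth (sum_smul_nonneg _ (fun i _ => hp i) fun i _ => hρ0 i)
        (by simp [hρ1', hp1]) hε hε1 (sum_smul_mem_smoothingBall hp hp1 hρ0 hρ1' hε hρ')
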